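/- If l is a prime with l ≥ n+1 and m < n/2, then every nonzero vector of the analogous Craig lattice A_n^{(m,l)} has squared Euclidean norm at least 2m. -/

import Mathlib

open Finset

noncomputable def derAt1 (n i : ℕ) : (Fin (n + 1) → ℤ) →ₗ[ℤ] ℤ :=
  ∑ j : Fin (n + 1), (((j : ℕ).descFactorial i : ℤ)) • LinearMap.proj j

noncomputable def craigLat (n m l : ℕ) : Submodule ℤ (Fin (n + 1) → ℤ) :=
  LinearMap.ker (derAt1 n 0) ⊓
    ⨅ i ∈ Finset.Ioo 0 m, Submodule.comap (derAt1 n i) (Ideal.span {(l : ℤ)})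

/-! Split `v = v⁺ - v⁻` into its positive and negative parts. Since `∑ vⱼ = 0`, both parts have
the same mass `P`, and `∑ vⱼ² ≥ 2P`. If `P < m`, let `S, T` be the multisets in `ZMod l` containing
each `j` with multiplicity `v⁺ⱼ`, resp. `v⁻ⱼ`. They have size `P`, and since the falling factorials
`j(j-1)⋯(j-i+1)` with `i < m` span the powers `jⁱ`, their power sums of orders `1, …, P` agree.
As `P < l`, Newton's identities then give equal elementary symmetric functions, so `S = T`; as
`0, …, n` are distinct modulo `l`, this forces `v⁺ = v⁻`, i.e. `v = 0`. -/

namespace Multiset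

variable {K : Type*}

theorem mul_esymm_eq_sum [CommRing K] (s : Multiset K) (k : ℕ) :
    (k : K) * s.esymm k = (-1) ^ (k + 1) *
      ∑ a ∈ HasAntidiagonal.antidiagonal k with a.1 < k,
        (-1) ^ a.1 * s.esymm a.1 * (s.map (· ^ a.2)).sum := by
  obtain ⟨N, f, rfl⟩ : ∃ (N : ℕ) (f : Fin N → K), univ.val.map f = s :=
    ⟨_, s.toList.get, by rw [Fin.univ_val_map, List.ofFn_get, coe_toList]⟩
  have hpsum (b : ℕ) : MvPolynomial.aeval f (MvPolynomial.psum _ K b) =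
      ((univ.val.map f).map (· ^ b)).sum := by
    rw [map_map, sum_map_val]
    simp [MvPolynomial.psum]
  simpa only [map_mul, map_natCast, map_sum, map_pow, map_neg, map_one,
    MvPolynomial.aeval_esymm_eq_multiset_esymm, hpsum] using
    congrArg (MvPolynomial.aeval f) (MvPolynomial.mul_esymm_eq_sum _ K k)

theorem esymm_eq_of_sum_map_pow_eq [Field K] {s t : Multiset K} {P : ℕ}
    (hchar : ∀ k, 0 < k → k ≤ P → (k : K) ≠ 0)
    (hpow : ∀ i, 0 < i → i ≤ P → (s.map (· ^ i)).sum = (t.map (· ^ i)).sum) :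
    ∀ k ≤ P, s.esymm k = t.esymm k := by
  intro k
  induction k using Nat.strong_induction_on with
  | _ k ih =>
    intro hk
    rcases Nat.eq_zero_or_pos k with rfl | hk0
    · simp [esymm]
    refine mul_left_cancel₀ (hchar k hk0 hk) ?_
    rw [mul_esymm_eq_sum, mul_esymm_eq_sum]
    congr 1
    refine sum_congr rfl fun a ha => ?_
    rw [Finset.mem_filter, HasAntidiagonal.mem_antidiagonal] at ha
    rw [ih a.1 ha.2 (by omega), hpow a.2 (by omega) (by omega)]

theorem eq_of_sum_map_pow_eq [Field K] {s t : Multiset K} (hcard : card s = card t)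
    (hchar : ∀ k, 0 < k → k ≤ card s → (k : K) ≠ 0)
    (hpow : ∀ i, 0 < i → i ≤ card s → (s.map (· ^ i)).sum = (t.map (· ^ i)).sum) :
    s = t := by
  have hesymm := esymm_eq_of_sum_map_pow_eq hchar hpow
  have hprod : (s.map fun r => Polynomial.X - Polynomial.C r).prod =
      (t.map fun r => Polynomial.X - Polynomial.C r).prod := by
    rw [prod_X_sub_X_eq_sum_esymm, prod_X_sub_X_eq_sum_esymm, ← hcard]
    refine sum_congr rfl fun j hj => ?_
    rw [hesymm j (Nat.lt_succ_iff.mp (mem_range.mp hj))]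
  simpa only [Polynomial.roots_multiset_prod_X_sub_C] using congrArg Polynomial.roots hprod

variable {ι : Type*} [Fintype ι]

def ofCounts (c : ι → ℕ) : Multiset ι := ∑ j, c j • {j}

theorem count_ofCounts [DecidableEq ι] (c : ι → ℕ) (j : ι) : (ofCounts c).count j = c j := by
  simp [ofCounts, count_sum', count_singleton]

theorem ofCounts_injective : Function.Injective (ofCounts : (ι → ℕ) → Multiset ι) := by
  classical
  intro c c' h
  funext j
  rw [← count_ofCounts c, h, count_ofCounts]

theorem card_ofCounts (c : ι → ℕ) : card (ofCounts c) = ∑ j, c j := by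
  simp [ofCounts, card_sum]

theorem sum_map_ofCounts {M : Type*} [AddCommMonoid M] (c : ι → ℕ) (f : ι → M) :
    ((ofCounts c).map f).sum = ∑ j, c j • f j := by
  have h := map_sum (mapAddMonoidHom f) (fun j => c j • ({j} : Multiset ι)) univ
  simp only [coe_mapAddMonoidHom] at h
  simp [ofCounts, h, sum_sum, map_nsmul, sum_nsmul]

end Multiset

theorem Nat.mul_descFactorial_eq_descFactorial_succ_add (x k : ℕ) :
    x * x.descFactorial k = x.descFactorial (k + 1) + k * x.descFactorial k := by
  rcases le_or_gt k x with h | h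
  · rw [Nat.descFactorial_succ, ← Nat.add_mul, Nat.sub_add_cancel h]
  · simp [Nat.descFactorial_eq_zero_iff_lt.2 h]

theorem dvd_sum_mul_pow_of_dvd_sum_mul_descFactorial {ι R : Type*} [CommRing R] (s : Finset ι)
    (e : ι → ℕ) {L : R} {i : ℕ} {w : ι → R}
    (h : ∀ k ≤ i, L ∣ ∑ j ∈ s, w j * (e j).descFactorial k) :
    L ∣ ∑ j ∈ s, w j * (e j : R) ^ i := by
  induction i generalizing w with
  | zero => simpa using h 0 le_rfl
  | succ i ih =>
    have hshift : ∀ k ≤ i, L ∣ ∑ j ∈ s, w j * e j * (e j).descFactorial k := by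
      intro k hk
      have hsplit : ∑ j ∈ s, w j * e j * (e j).descFactorial k =
          ∑ j ∈ s, w j * (e j).descFactorial (k + 1) +
            k * ∑ j ∈ s, w j * (e j).descFactorial k := by
        rw [mul_sum, ← sum_add_distrib]
        refine sum_congr rfl fun j _ => ?_
        rw [mul_assoc, ← Nat.cast_mul, Nat.mul_descFactorial_eq_descFactorial_succ_add]
        push_cast
        ring
      rw [hsplit]
      exact dvd_add (h _ (by omega)) (dvd_mul_of_dvd_right (h _ (by omega)) _)
    simpa only [pow_succ', mul_assoc] using ih hshift

theorem sum_toNat_eq_sum_toNat_neg {ι : Type*} (s : Finset ι) {w : ι → ℤ}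
    (hw : ∑ j ∈ s, w j = 0) : ∑ j ∈ s, (w j).toNat = ∑ j ∈ s, (-w j).toNat := by
  zify
  rw [← sub_eq_zero, ← sum_sub_distrib, ← hw]
  exact sum_congr rfl fun j _ => (w j).toNat_sub_toNat_neg

theorem eq_zero_of_sum_mul_pow_eq_zero {ι K : Type*} [Fintype ι] [Field K] {x : ι → K}
    (hx : Function.Injective x) {w : ι → ℤ} (hw : ∑ j, w j = 0)
    (hchar : ∀ k, 0 < k → k ≤ ∑ j, (w j).toNat → (k : K) ≠ 0)
    (hpow : ∀ i, 0 < i → i ≤ ∑ j, (w j).toNat → ∑ j, (w j : K) * x j ^ i = 0) :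
    w = 0 := by
  set pos : ι → ℕ := fun j => (w j).toNat
  set neg : ι → ℕ := fun j => (-w j).toNat
  have hcard : Multiset.card ((Multiset.ofCounts pos).map x) =
      Multiset.card ((Multiset.ofCounts neg).map x) := by
    simp only [Multiset.card_map, Multiset.card_ofCounts]
    exact sum_toNat_eq_sum_toNat_neg _ hw
  have hST : (Multiset.ofCounts pos).map x = (Multiset.ofCounts neg).map x := by
    refine Multiset.eq_of_sum_map_pow_eq hcard ?_ ?_
    · simpa [Multiset.card_ofCounts] using hchar
    · intro i hi0 hi
      rw [Multiset.card_map, Multiset.card_ofCounts] at hi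
      rw [Multiset.map_map, Multiset.map_map, ← sub_eq_zero, Multiset.sum_map_ofCounts,
        Multiset.sum_map_ofCounts, ← sum_sub_distrib, ← hpow i hi0 hi]
      refine sum_congr rfl fun j _ => ?_
      rw [nsmul_eq_mul, nsmul_eq_mul, ← sub_mul, ← (w j).toNat_sub_toNat_neg]
      push_cast
      rfl
  have hcounts := Multiset.ofCounts_injective (Multiset.map_injective hx hST)
  funext j
  have := congrFun hcounts j
  simp only [pos, neg] at this
  simp only [Pi.zero_apply]
  omega

theorem derAt1_apply (n i : ℕ) (v : Fin (n + 1) → ℤ) :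
    derAt1 n i v = ∑ j, v j * (j : ℕ).descFactorial i := by
  simp [derAt1, mul_comm]

section craigLat

variable {n m l : ℕ} {v : Fin (n + 1) → ℤ}

theorem sum_eq_zero_of_mem_craigLat (hv : v ∈ craigLat n m l) : ∑ j, v j = 0 := by
  simpa [derAt1_apply] using (Submodule.mem_inf.mp hv).1

theorem dvd_derAt1_of_mem_craigLat (hv : v ∈ craigLat n m l) {i : ℕ} (hi : i < m) :
    (l : ℤ) ∣ derAt1 n i v := by
  obtain ⟨hker, hcong⟩ := Submodule.mem_inf.mp hv
  rcases Nat.eq_zero_or_pos i with rfl | hi0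
  · rw [LinearMap.mem_ker.mp hker]
    exact dvd_zero _
  · simp only [Submodule.mem_iInf, Submodule.mem_comap, Ideal.mem_span_singleton] at hcong
    exact hcong i (mem_Ioo.mpr ⟨hi0, hi⟩)

theorem dvd_sum_mul_pow_of_mem_craigLat (hv : v ∈ craigLat n m l) {i : ℕ} (hi : i < m) :
    (l : ℤ) ∣ ∑ j, v j * ((j : ℕ) : ℤ) ^ i :=
  dvd_sum_mul_pow_of_dvd_sum_mul_descFactorial _ _ fun k hk => by
    simpa only [derAt1_apply] using dvd_derAt1_of_mem_craigLat hv (hk.trans_lt hi)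

theorem eq_zero_of_mem_craigLat_of_sum_toNat_lt [Fact l.Prime] (hml : m ≤ l) (hl : n < l)
    (hv : v ∈ craigLat n m l) (hsmall : ∑ j, (v j).toNat < m) : v = 0 := by
  refine eq_zero_of_sum_mul_pow_eq_zero (x := fun j : Fin (n + 1) => ((j : ℕ) : ZMod l)) ?_
    (sum_eq_zero_of_mem_craigLat hv) ?_ ?_
  · intro j j' h
    rw [ZMod.natCast_eq_natCast_iff', Nat.mod_eq_of_lt (by omega),
      Nat.mod_eq_of_lt (by omega)] at h
    exact Fin.ext h
  · intro k hk0 hk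
    rw [Ne, ZMod.natCast_eq_zero_iff]
    exact fun hdvd => absurd (Nat.le_of_dvd hk0 hdvd) (by omega)
  · intro i _ hi
    have := (ZMod.intCast_zmod_eq_zero_iff_dvd _ l).mpr
      (dvd_sum_mul_pow_of_mem_craigLat hv (by omega : i < m))
    simpa using this

end craigLat

theorem craig_min_norm_general (n m l : ℕ) (hmn : 2 * m < n)
    (hl : n + 1 ≤ l) (hlp : l.Prime) :
    ∀ v ∈ craigLat n m l, v ≠ 0 → (2 * m : ℤ) ≤ ∑ j, (v j) ^ 2 := by
  intro v hv hv0
  have : Fact l.Prime := ⟨hlp⟩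
  have hbalance := sum_toNat_eq_sum_toNat_neg _ (sum_eq_zero_of_mem_craigLat hv)
  have hmass : m ≤ ∑ j, (v j).toNat := by
    by_contra! hsmall
    exact hv0 (eq_zero_of_mem_craigLat_of_sum_toNat_lt (by omega) (by omega) hv hsmall)
  have hsplit : 2 * m ≤ ∑ j, ((v j).toNat + (-v j).toNat) := by
    rw [sum_add_distrib, ← hbalance]
    omega
  calc (2 * m : ℤ) ≤ ∑ j, (((v j).toNat + (-v j).toNat : ℕ) : ℤ) := by exact_mod_cast hsplit
    _ ≤ ∑ j, v j ^ 2 := sum_le_sum fun j _ => by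
      rw [Int.toNat_add_toNat_neg_eq_natAbs]
      exact Int.natAbs_le_self_sq _

/-- If `l` is a prime with `l ≥ n+1` and `m < n/2`, every nonzero vector of the analogous
Craig lattice `A_n^{(m,l)}` has squared Euclidean norm at least `2m`. -/
theorem craig_min_norm (n m l : ℕ) (hm : 0 < m) (hmn : 2 * m < n)
    (hl : n + 1 ≤ l) (hlp : l.Prime) :
    ∀ v ∈ craigLat n m l, v ≠ 0 → (2 * m : ℤ) ≤ ∑ j, (v j) ^ 2 :=
  craig_min_norm_general n m l hmn hl hlp
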